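/- Let Θ = {±e_j : j = 1,…,d} ⊂ ℝ^d (signed standard basis vectors), P0 the uniform distribution on {−1,1}^d, and for v ∈ Θ and δ ∈ [0,1], P_v the distribution on {−1,1}^d with p.m.f. p_v(x) = 2^{−d}(1 + δ v^T x). Then the complexity C₂({P_v}) := sup over f with E_{P0}[f(X)²] ≤ 1 of (1/|Θ|) Σ_{v∈Θ} (E_{P0}[f(X)] − E_{P_v}[f(X)])² satisfies C₂({P_v}) ≤ δ²/d. -/

import Mathlib

/-!
Writing `a_j = E_{P₀}[f(X) X_j]`, one has `E_{P₀}[f] - E_{P_{±e_j}}[f] = ∓ δ a_j`, so the averaged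
squared difference is `(δ² / d) ∑_j a_j²`. The coordinates `X_j` are orthonormal in `L²(P₀)`, hence
Bessel's inequality gives `∑_j a_j² ≤ E_{P₀}[f²] ≤ 1`.
-/

/-- The sign `±1` associated with a Boolean. -/
def sgn (b : Bool) : ℝ := if b then 1 else -1

/-- Expectation under the uniform distribution `P₀` on `{-1,1}^d`. -/
noncomputable def expP0 {d : ℕ} (f : (Fin d → Bool) → ℝ) : ℝ :=
  ∑ x : Fin d → Bool, (2 : ℝ)⁻¹ ^ d * f x

/-- Expectation under the tilted distribution `P_v` with p.m.f.
`p_v(x) = 2^{-d}(1 + δ vᵀx)`, where `v = ±e_j` is encoded by `(j, b) ∈ Fin d × Bool`. -/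
noncomputable def expPv {d : ℕ} (δ : ℝ) (v : Fin d × Bool) (f : (Fin d → Bool) → ℝ) : ℝ :=
  ∑ x : Fin d → Bool, ((2 : ℝ)⁻¹ ^ d * (1 + δ * (sgn v.2 * sgn (x v.1)))) * f x

lemma sgn_mul_self (b : Bool) : sgn b * sgn b = 1 := by cases b <;> simp [sgn]

lemma sgn_not (b : Bool) : sgn (!b) = -sgn b := by cases b <;> simp [sgn]

namespace BoolCube

variable {d : ℕ}

def flip (j : Fin d) : Equiv.Perm (Fin d → Bool) :=
  Function.Involutive.toPerm (fun x => Function.update x j (!x j)) fun x => by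
    funext i
    by_cases h : i = j
    · subst h; simp
    · simp [Function.update_of_ne h]

@[simp] lemma flip_apply (j : Fin d) (x : Fin d → Bool) :
    flip j x = Function.update x j (!x j) := rfl

lemma expP0_const (c : ℝ) : expP0 (fun _ : Fin d → Bool => c) = c := by
  simp [expP0, Finset.card_univ]

lemma expP0_eq_zero_of_flip_odd (j : Fin d) {F : (Fin d → Bool) → ℝ}
    (hF : ∀ x, F (flip j x) = -F x) : expP0 F = 0 := by
  have h := Equiv.sum_comp (flip j) (fun x => (2 : ℝ)⁻¹ ^ d * F x)
  simp only [hF, mul_neg, Finset.sum_neg_distrib] at h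
  unfold expP0
  linarith

lemma expP0_sgn_mul_sgn (j k : Fin d) :
    expP0 (fun x => sgn (x j) * sgn (x k)) = if j = k then 1 else 0 := by
  split_ifs with h
  · subst h
    simp only [sgn_mul_self, expP0_const]
  · refine expP0_eq_zero_of_flip_odd j fun x => ?_
    rw [flip_apply, Function.update_self, Function.update_of_ne (Ne.symm h), sgn_not, neg_mul]

noncomputable def corr (f : (Fin d → Bool) → ℝ) (j : Fin d) : ℝ :=
  expP0 fun x => f x * sgn (x j)

lemma expPv_eq (δ : ℝ) (v : Fin d × Bool) (f : (Fin d → Bool) → ℝ) :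
    expPv δ v f = expP0 f + δ * sgn v.2 * corr f v.1 := by
  simp only [expPv, expP0, corr, Finset.mul_sum, ← Finset.sum_add_distrib]
  exact Finset.sum_congr rfl fun x _ => by ring

lemma sum_sq_expP0_sub_expPv (δ : ℝ) (f : (Fin d → Bool) → ℝ) :
    ∑ v : Fin d × Bool, (expP0 f - expPv δ v f) ^ 2 = 2 * δ ^ 2 * ∑ j, corr f j ^ 2 := by
  have hsq (v : Fin d × Bool) : (expP0 f - expPv δ v f) ^ 2 = δ ^ 2 * corr f v.1 ^ 2 := by
    rw [expPv_eq]
    linear_combination (δ * corr f v.1) ^ 2 * sgn_mul_self v.2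
  simp only [hsq, Fintype.sum_prod_type, Finset.sum_const, Finset.card_univ,
    Fintype.card_bool, Finset.mul_sum]
  exact Finset.sum_congr rfl fun j _ => by ring

noncomputable def toL2 (f : (Fin d → Bool) → ℝ) : EuclideanSpace ℝ (Fin d → Bool) :=
  WithLp.toLp 2 fun x => √((2 : ℝ)⁻¹ ^ d) * f x

lemma inner_toL2 (f g : (Fin d → Bool) → ℝ) :
    inner ℝ (toL2 f) (toL2 g) = expP0 fun x => f x * g x := by
  have hw : √((2 : ℝ)⁻¹ ^ d) * √((2 : ℝ)⁻¹ ^ d) = (2 : ℝ)⁻¹ ^ d :=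
    Real.mul_self_sqrt (by positivity)
  rw [PiLp.inner_apply, expP0]
  refine Finset.sum_congr rfl fun x _ => ?_
  simp only [toL2, RCLike.inner_apply, conj_trivial]
  linear_combination (f x * g x) * hw

lemma orthonormal_toL2_sgn : Orthonormal ℝ fun j : Fin d => toL2 fun x => sgn (x j) := by
  rw [orthonormal_iff_ite]
  intro j k
  rw [inner_toL2, expP0_sgn_mul_sgn]

lemma sum_corr_sq_le (f : (Fin d → Bool) → ℝ) :
    ∑ j, corr f j ^ 2 ≤ expP0 fun x => f x ^ 2 := by
  have hcorr (j : Fin d) : corr f j = inner ℝ (toL2 fun x => sgn (x j)) (toL2 f) := by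
    rw [inner_toL2, corr]
    simp only [mul_comm]
  have hnorm : ‖toL2 f‖ ^ 2 = expP0 fun x => f x ^ 2 := by
    rw [← real_inner_self_eq_norm_sq, inner_toL2]
    simp only [sq]
  simpa only [hcorr, Real.norm_eq_abs, sq_abs, hnorm] using
    orthonormal_toL2_sgn.sum_inner_products_le (s := Finset.univ) (toL2 f)

end BoolCube

theorem statement16_general (d : ℕ) (δ : ℝ) :
    (⨆ f : {f : (Fin d → Bool) → ℝ // expP0 (fun x => (f x) ^ 2) ≤ 1},
        (1 / (2 * (d : ℝ))) *
          ∑ v : Fin d × Bool, (expP0 f.1 - expPv δ v f.1) ^ 2) ≤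
      δ ^ 2 / d := by
  have : Nonempty {f : (Fin d → Bool) → ℝ // expP0 (fun x => (f x) ^ 2) ≤ 1} :=
    ⟨⟨0, by simp [expP0]⟩⟩
  refine ciSup_le fun ⟨f, hf⟩ => ?_
  rw [BoolCube.sum_sq_expP0_sub_expPv]
  calc 1 / (2 * (d : ℝ)) * (2 * δ ^ 2 * ∑ j, BoolCube.corr f j ^ 2)
      = δ ^ 2 / d * ∑ j, BoolCube.corr f j ^ 2 := by ring
    _ ≤ δ ^ 2 / d :=
      mul_le_of_le_one_right (by positivity) ((BoolCube.sum_corr_sq_le f).trans hf)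

/-- Complexity bound for the 1-sparse mean estimation packing: with `Θ = {±e_j}_{j=1}^d`,
`P₀` uniform on `{-1,1}^d` and `p_v(x) = 2^{-d}(1 + δ vᵀx)`,
`C₂({P_v}) = sup_{E_{P₀}[f²] ≤ 1} (1/|Θ|) Σ_v (E_{P₀}[f] - E_{P_v}[f])² ≤ δ²/d`. -/
theorem statement16 (d : ℕ) (hd : 0 < d) (δ : ℝ) (hδ : δ ∈ Set.Icc (0 : ℝ) 1) :
    (⨆ f : {f : (Fin d → Bool) → ℝ // expP0 (fun x => (f x) ^ 2) ≤ 1},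
        (1 / (2 * (d : ℝ))) *
          ∑ v : Fin d × Bool, (expP0 f.1 - expPv δ v f.1) ^ 2) ≤
      δ ^ 2 / d :=
  statement16_general d δ
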